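/- arXiv:1304.7719 — 5 statements merged into one kernel-verified Lean document; each statement's English description precedes it below -/
import Mathlib

section
/- Let S be a closed set of pairs and g ∈ SL_n(ℂ). Then ⋀_{i∈S_j}(g e_i) = ⋀_{i∈S_j} e_i holds in Λ^{|S_j|}ℂ^n for every j = 1,…,n if and only if g ∈ U_S. Equivalently, the stabiliser in SL_n(ℂ) of the point p_S = ⨁_{j=1}^n ⋀_{i∈S_j} e_i ∈ ⨁_{j=1}^n Λ^{|S_j|}ℂ^n (under the componentwise exterior-power action) is exactly U_S. -/
/-!
The coordinates of `⋀_{i∈S_j} (g e_i)` are the maximal minors of the columns `S_j` of `g`,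
so the condition says that these minors are `δ_{C,S_j}`. By Cramer's rule for `g[S_j,S_j]`, whose
determinant is `1`, every row of `g` outside `S_j` then vanishes on the columns `S_j`. Since
`j ∈ S_j` and every `i ∈ S_j` is `≤ j`, this is exactly the zero pattern of `U_S`; in particular `g`
is upper triangular, so `∏_{i∈S_j} g_ii = 1` for every `j`, and induction on `j` gives a unit
diagonal. Conversely, for `u ∈ U_S` closedness of `S` makes the rows of `u` outside `S_j` vanish
on the columns `S_j`, so every minor with rows `C ≠ S_j` has a zero row, while `u[S_j,S_j]` is
unitriangular.
-/

open Matrix Filter Topology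

noncomputable section

/-- A finite set `S` of pairs `(i,j)` of indices with `i < j` is *closed* if
`(i,j) ∈ S` and `(j,k) ∈ S` imply `(i,k) ∈ S`. -/
def PairsClosed {n : ℕ} (S : Finset (Fin n × Fin n)) : Prop :=
  (∀ p ∈ S, p.1 < p.2) ∧ ∀ i j k : Fin n, (i, j) ∈ S → (j, k) ∈ S → (i, k) ∈ S

/-- The subgroup `U_S` of `SL_n(ℂ)`, as a set: matrices that are upper triangular,
with ones on the diagonal, and vanishing at each entry `(i,j)` with `i < j` and
`(i,j) ∉ S`. -/
def USet {n : ℕ} (S : Finset (Fin n × Fin n)) :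
    Set (Matrix.SpecialLinearGroup (Fin n) ℂ) :=
  {u | (∀ i j : Fin n, j < i → u.val i j = 0) ∧ (∀ i : Fin n, u.val i i = 1) ∧
       ∀ i j : Fin n, i < j → (i, j) ∉ S → u.val i j = 0}

/-- `S_j = {j} ∪ {i : (i,j) ∈ S}`. -/
def colS {n : ℕ} (S : Finset (Fin n × Fin n)) (j : Fin n) : Finset (Fin n) :=
  insert j ((S.filter (fun p => p.2 = j)).image Prod.fst)

/-- The index set of the standard basis of `Λ^k ℂ^n`: subsets of `{1,…,n}` of size `k`. -/
abbrev SubK (n k : ℕ) := {C : Finset (Fin n) // C.card = k}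

/-- The increasing enumeration of a size-`k` subset of `{1,…,n}`. -/
def enumK {n k : ℕ} (C : SubK n k) (a : Fin k) : Fin n :=
  (C.1.orderIsoOfFin C.2 a : Fin n)

/-- The `k`-th exterior power `Λ^k ℂ^n`, in the coordinates given by its standard basis
`⋀_{i∈C} e_i`, `C ⊆ {1,…,n}`, `|C| = k`. -/
abbrev ExtP (n k : ℕ) := SubK n k → ℂ

/-- The standard basis vector `e_i` of `ℂ^n`. -/
def stdVec {n : ℕ} (i : Fin n) : Fin n → ℂ := Pi.single i 1

/-- The wedge `v_1 ∧ … ∧ v_k ∈ Λ^k ℂ^n` of a family of vectors, in standard coordinates: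
its coordinate along the basis vector `⋀_{i∈C} e_i` is the determinant of the `k×k`
matrix of the `C`-coordinates of `v_1,…,v_k`. -/
def wedgeFam {n : ℕ} (k : ℕ) (v : Fin k → (Fin n → ℂ)) : ExtP n k :=
  fun C => Matrix.det (Matrix.of fun a b : Fin k => v b (enumK C a))

/-- `⋀_{i∈C} e_i`, the wedge of the standard basis vectors indexed by `C`, taken in
increasing order of indices. -/
def wedgeBasis {n : ℕ} (k : ℕ) (C : Finset (Fin n)) (h : C.card = k) : ExtP n k :=
  wedgeFam k (fun a => stdVec (C.orderIsoOfFin h a))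

/-- `⋀_{i∈D} (g e_i)`, the wedge of the columns of `g` indexed by `D`, taken in
increasing order of indices. -/
def colWedge {n : ℕ} (k : ℕ) (g : Matrix (Fin n) (Fin n) ℂ) (D : Finset (Fin n))
    (h : D.card = k) : ExtP n k :=
  wedgeFam k (fun a => g.mulVec (stdVec (D.orderIsoOfFin h a)))

/-- The minor of `g` with rows `C` and columns `D` (both of size `k`, in increasing
order of indices). -/
def gminor {n : ℕ} (k : ℕ) (g : Matrix (Fin n) (Fin n) ℂ) (C D : SubK n k) : ℂ :=
  Matrix.det (Matrix.of fun a b : Fin k => g (enumK C a) (enumK D b))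

/-- The action of `g` on `Λ^k ℂ^n` (the `k`-th exterior power of the standard action of
`g` on `ℂ^n`), in standard coordinates: the matrix of `Λ^k g` in the standard basis is
the `k`-th compound matrix of `g`, whose entries are the `k×k` minors of `g`. -/
def extAct {n : ℕ} (k : ℕ) (g : Matrix (Fin n) (Fin n) ℂ) (x : ExtP n k) : ExtP n k :=
  fun C => ∑ D : SubK n k, gminor k g C D * x D

section Minors

variable {n k : ℕ}

lemma enumK_strictMono (C : SubK n k) : StrictMono (enumK C) :=
  fun _ _ hab => Subtype.coe_lt_coe.mpr ((C.1.orderIsoOfFin C.2).lt_iff_lt.mpr hab)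

lemma enumK_mem (C : SubK n k) (a : Fin k) : enumK C a ∈ C.1 :=
  (C.1.orderIsoOfFin C.2 a).2

lemma exists_enumK_eq (C : SubK n k) {x : Fin n} (hx : x ∈ C.1) :
    ∃ a, enumK C a = x :=
  ⟨(C.1.orderIsoOfFin C.2).symm ⟨x, hx⟩, by simp [enumK]⟩

lemma exists_perm_enumK_comp (C : SubK n k) {f : Fin k → Fin n}
    (hf : Function.Injective f) (hfC : ∀ a, f a ∈ C.1) :
    ∃ σ : Equiv.Perm (Fin k), enumK C ∘ σ = f := by
  let τ : Fin k → Fin k := fun a => (C.1.orderIsoOfFin C.2).symm ⟨f a, hfC a⟩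
  have hτ : Function.Injective τ := fun a b hab => hf <| by
    simpa [τ] using congrArg Subtype.val ((C.1.orderIsoOfFin C.2).symm.injective.eq_iff.mp hab)
  exact ⟨Equiv.ofBijective τ (Finite.injective_iff_bijective.mp hτ), funext fun a => by
    simp [τ, enumK]⟩

lemma prod_enumK {M : Type*} [CommMonoid M] (C : SubK n k) (d : Fin n → M) :
    ∏ a, d (enumK C a) = ∏ i ∈ C.1, d i := by
  rw [← Finset.prod_coe_sort C.1]
  exact (C.1.orderIsoOfFin C.2).toEquiv.prod_comp (fun i => d i)

lemma gminor_eq_det_submatrix (g : Matrix (Fin n) (Fin n) ℂ) (C D : SubK n k) :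
    gminor k g C D = (g.submatrix (enumK C) (enumK D)).det :=
  rfl

lemma colWedge_eq (g : Matrix (Fin n) (Fin n) ℂ) (D : Finset (Fin n))
    (h : D.card = k) : colWedge k g D h = fun C => gminor k g C ⟨D, h⟩ := by
  ext C
  simp only [colWedge, wedgeFam, gminor, stdVec, mulVec_single_one]
  rfl

lemma wedgeBasis_eq_colWedge_one (D : Finset (Fin n)) (h : D.card = k) :
    wedgeBasis k D h = colWedge k 1 D h := by
  simp only [wedgeBasis, colWedge, one_mulVec]

lemma gminor_self_of_isUpperTriangular {g : Matrix (Fin n) (Fin n) ℂ}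
    (hg : g.IsUpperTriangular) (D : SubK n k) : gminor k g D D = ∏ i ∈ D.1, g i i := by
  have hD : (g.submatrix (enumK D) (enumK D)).IsUpperTriangular :=
    fun a b hab => hg (enumK_strictMono D hab)
  rw [gminor_eq_det_submatrix, det_of_isUpperTriangular hD, ← prod_enumK D (fun i => g i i)]
  rfl

lemma gminor_eq_zero_of_row_eq_zero {g : Matrix (Fin n) (Fin n) ℂ} {C : SubK n k}
    (D : SubK n k) {c : Fin n} (hc : c ∈ C.1) (hzero : ∀ s ∈ D.1, g c s = 0) :
    gminor k g C D = 0 := by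
  obtain ⟨a, rfl⟩ := exists_enumK_eq C hc
  exact det_eq_zero_of_row_eq_zero a fun b => hzero _ (enumK_mem D b)

lemma exists_mem_notMem_of_ne {C D : SubK n k} (h : C ≠ D) :
    ∃ c ∈ C.1, c ∉ D.1 := by
  by_contra! hCD
  exact h (Subtype.ext (Finset.eq_of_subset_of_card_le hCD (by rw [C.2, D.2])))

lemma gminor_col_eq_single {g : Matrix (Fin n) (Fin n) ℂ}
    (hg : g.IsUpperTriangular) (hdiag : ∀ i, g i i = 1) {D : SubK n k}
    (hD : ∀ c ∉ D.1, ∀ s ∈ D.1, g c s = 0) :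
    (fun C => gminor k g C D) = Pi.single D 1 := by
  ext C
  by_cases hCD : C = D
  · subst hCD
    rw [Pi.single_eq_same, gminor_self_of_isUpperTriangular hg]
    exact Finset.prod_eq_one fun i _ => hdiag i
  · obtain ⟨c, hcC, hcD⟩ := exists_mem_notMem_of_ne hCD
    rw [Pi.single_eq_of_ne hCD, gminor_eq_zero_of_row_eq_zero D hcC (hD c hcD)]

lemma wedgeBasis_eq_single (D : Finset (Fin n)) (h : D.card = k) :
    wedgeBasis k D h = Pi.single ⟨D, h⟩ 1 := by
  rw [wedgeBasis_eq_colWedge_one, colWedge_eq]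
  refine gminor_col_eq_single (fun i j hij => one_apply_ne (ne_of_gt hij)) one_apply_eq ?_
  intro c hc s hs
  exact one_apply_ne (ne_of_mem_of_not_mem hs hc).symm

/-- Replacing in `g[D,D]` the row `enumK D a` by the row `r ∉ D` gives, up to sign,
the minor of `g` with rows `(D \ {enumK D a}) ∪ {r}` and columns `D`. -/
lemma det_updateRow_eq_zero_of_gminor_col_eq_single {g : Matrix (Fin n) (Fin n) ℂ}
    {D : SubK n k} (hmin : (fun C => gminor k g C D) = Pi.single D 1) {r : Fin n}
    (hr : r ∉ D.1) (a : Fin k) :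
    ((g.submatrix (enumK D) (enumK D)).updateRow a (fun b => g r (enumK D b))).det = 0 := by
  classical
  let f : Fin k → Fin n := Function.update (enumK D) a r
  let C : SubK n k := ⟨insert r (D.1.erase (enumK D a)), by
    rw [Finset.card_insert_of_notMem fun h => hr (Finset.mem_of_mem_erase h),
      Finset.card_erase_of_mem (enumK_mem D a), D.2, Nat.sub_add_cancel a.pos]⟩
  have hf : Function.Injective f := by
    intro b c hbc
    simp only [f, Function.update_apply] at hbc
    split_ifs at hbc with hb hc hc
    · exact hb.trans hc.symm
    · exact absurd (hbc ▸ enumK_mem D c) hr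
    · exact absurd (hbc ▸ enumK_mem D b) hr
    · exact (enumK_strictMono D).injective hbc
  have hfC : ∀ b, f b ∈ C.1 := by
    intro b
    rcases eq_or_ne b a with rfl | hb
    · simp [f, C]
    · simp only [f, Function.update_of_ne hb, C, Finset.mem_insert, Finset.mem_erase]
      exact Or.inr ⟨(enumK_strictMono D).injective.ne hb, enumK_mem D b⟩
  have hCD : C ≠ D := fun h => hr (h ▸ Finset.mem_insert_self r _)
  obtain ⟨σ, hσ⟩ := exists_perm_enumK_comp C hf hfC
  have hrow : (g.submatrix (enumK D) (enumK D)).updateRow a (fun b => g r (enumK D b))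
      = (g.submatrix (enumK C) (enumK D)).submatrix σ id := by
    rw [submatrix_submatrix, hσ]
    ext b c
    rcases eq_or_ne b a with rfl | hb
    · simp [f]
    · simp [f, hb]
  rw [hrow, det_permute, ← gminor_eq_det_submatrix, congrFun hmin C, Pi.single_eq_of_ne hCD,
    mul_zero]

/-- Cramer's rule: the row `r` of `g[·,D]` solves the homogeneous system with matrix `g[D,D]ᵀ`,
whose determinant is `1`. -/
lemma eq_zero_of_gminor_col_eq_single {g : Matrix (Fin n) (Fin n) ℂ}
    {D : SubK n k} (hmin : (fun C => gminor k g C D) = Pi.single D 1) {r s : Fin n}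
    (hr : r ∉ D.1) (hs : s ∈ D.1) : g r s = 0 := by
  set M := g.submatrix (enumK D) (enumK D)
  have hdet : M.det = 1 := (congrFun hmin D).trans (Pi.single_eq_same D 1)
  have hcramer : Mᵀ.cramer (fun b => g r (enumK D b)) = 0 := by
    ext a
    rw [cramer_apply, updateCol_transpose, det_transpose,
      det_updateRow_eq_zero_of_gminor_col_eq_single hmin hr a]
    rfl
  have hv := mulVec_cramer Mᵀ (fun b => g r (enumK D b))
  rw [hcramer, mulVec_zero, det_transpose, hdet, one_smul] at hv
  obtain ⟨b, rfl⟩ := exists_enumK_eq D hs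
  exact (congrFun hv b).symm

lemma prod_diag_eq_one_of_gminor_col_eq_single {g : Matrix (Fin n) (Fin n) ℂ}
    (hg : g.IsUpperTriangular) {D : SubK n k}
    (hmin : (fun C => gminor k g C D) = Pi.single D 1) : ∏ i ∈ D.1, g i i = 1 := by
  rw [← gminor_self_of_isUpperTriangular hg, congrFun hmin D, Pi.single_eq_same]

end Minors

section ClosedPairs

variable {n : ℕ} {S : Finset (Fin n × Fin n)}

lemma mem_colS {i j : Fin n} : i ∈ colS S j ↔ i = j ∨ (i, j) ∈ S := by
  simp [colS]

lemma self_mem_colS (j : Fin n) : j ∈ colS S j :=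
  mem_colS.mpr (Or.inl rfl)

lemma notMem_colS_of_mem_colS
    (hS : ∀ i j k : Fin n, (i, j) ∈ S → (j, k) ∈ S → (i, k) ∈ S) {c s j : Fin n}
    (hc : c ∉ colS S j) (hs : s ∈ colS S j) : c ∉ colS S s := by
  simp only [mem_colS, not_or] at hc hs ⊢
  rcases hs with rfl | hs
  · exact hc
  · exact ⟨fun hcs => hc.2 (hcs ▸ hs), fun hcs => hc.2 (hS c s j hcs hs)⟩

lemma isUpperTriangular_of_forall_notMem_colS
    (hS : ∀ p ∈ S, p.1 < p.2) {g : Matrix (Fin n) (Fin n) ℂ}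
    (hzero : ∀ i j, i ∉ colS S j → g i j = 0) : g.IsUpperTriangular := by
  intro i j hji
  refine hzero i j fun hi => ?_
  rcases mem_colS.mp hi with rfl | hij
  · exact lt_irrefl _ hji
  · exact lt_asymm hji (hS _ hij)

lemma mem_USet_iff (hS : ∀ p ∈ S, p.1 < p.2)
    {g : Matrix.SpecialLinearGroup (Fin n) ℂ} :
    g ∈ USet S ↔ (∀ i j, i ∉ colS S j → g.val i j = 0) ∧ ∀ i, g.val i i = 1 := by
  constructor
  · rintro ⟨hlower, hdiag, hpat⟩
    refine ⟨fun i j hi => ?_, hdiag⟩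
    simp only [mem_colS, not_or] at hi
    rcases lt_or_gt_of_ne hi.1 with hij | hji
    · exact hpat i j hij hi.2
    · exact hlower i j hji
  · rintro ⟨hzero, hdiag⟩
    refine ⟨fun i j hji => isUpperTriangular_of_forall_notMem_colS hS hzero hji, hdiag,
      fun i j hij hijS => hzero i j ?_⟩
    simp [mem_colS, hijS, hij.ne]

lemma eq_one_of_prod_colS_eq_one {M : Type*} [CommMonoid M]
    (hS : ∀ p ∈ S, p.1 < p.2) {d : Fin n → M} (h : ∀ j, ∏ i ∈ colS S j, d i = 1) (j : Fin n) :
    d j = 1 := by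
  induction j using WellFoundedLT.induction with
  | _ j ih =>
    have hrest : ∀ i ∈ (colS S j).erase j, d i = 1 := fun i hi => by
      obtain ⟨hij, hi⟩ := Finset.mem_erase.mp hi
      exact ih i (hS _ ((mem_colS.mp hi).resolve_left hij))
    rw [← h j, ← Finset.mul_prod_erase _ _ (self_mem_colS j), Finset.prod_eq_one hrest, mul_one]

end ClosedPairs

theorem stmt0_general {n : ℕ} (S : Finset (Fin n × Fin n)) (hS : PairsClosed S)
    (g : Matrix.SpecialLinearGroup (Fin n) ℂ) :
    (∀ j : Fin n,
        colWedge (colS S j).card g.val (colS S j) rfl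
          = wedgeBasis (colS S j).card (colS S j) rfl)
      ↔ g ∈ USet S := by
  simp only [colWedge_eq, wedgeBasis_eq_single]
  rw [mem_USet_iff hS.1]
  constructor
  · intro hmin
    have hzero : ∀ i j, i ∉ colS S j → g.val i j = 0 := fun i j hi =>
      eq_zero_of_gminor_col_eq_single (hmin j) hi (self_mem_colS j)
    have hg := isUpperTriangular_of_forall_notMem_colS hS.1 hzero
    exact ⟨hzero, eq_one_of_prod_colS_eq_one hS.1 fun j =>
      prod_diag_eq_one_of_gminor_col_eq_single hg (hmin j)⟩
  · rintro ⟨hzero, hdiag⟩ j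
    exact gminor_col_eq_single (isUpperTriangular_of_forall_notMem_colS hS.1 hzero) hdiag
      fun c hc s hs => hzero c s (notMem_colS_of_mem_colS hS.2 hc hs)

/-- Let `S` be a closed set of pairs and `g ∈ SL_n(ℂ)`. Then
`⋀_{i∈S_j}(g e_i) = ⋀_{i∈S_j} e_i` holds in `Λ^{|S_j|} ℂ^n` for every `j = 1,…,n`
if and only if `g ∈ U_S`: the stabiliser of
`p_S = ⨁_{j=1}^n ⋀_{i∈S_j} e_i ∈ ⨁_{j=1}^n Λ^{|S_j|} ℂ^n` in `SL_n(ℂ)` is exactly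
`U_S`. -/
theorem stmt0 {n : ℕ} (hn : 1 ≤ n) (S : Finset (Fin n × Fin n)) (hS : PairsClosed S)
    (g : Matrix.SpecialLinearGroup (Fin n) ℂ) :
    (∀ j : Fin n,
        colWedge (colS S j).card g.val (colS S j) rfl
          = wedgeBasis (colS S j).card (colS S j) rfl)
      ↔ g ∈ USet S :=
  stmt0_general S hS g

end
end

section
/- Let S be a closed set of pairs. For every α = (α_1,…,α_n) ∈ (ℤ_{>0})^n and every g ∈ SL_n(ℂ), one has g·p_{S,α} = p_{S,α} (i.e., g fixes each component (⋀_{i∈S_j} e_i) ⊗ ẽ_n^{⊗α_j} of q_{S,α} and each component e_1∧…∧e_i of r_n) if and only if g ∈ U_S. That is, the stabiliser of p_{S,α} in SL_n(ℂ) is U_S. -/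
open Matrix Filter Topology

noncomputable section

/-- `e_1 ∧ … ∧ e_{i}`, the wedge of an initial segment of the standard basis, an element
of `Λ^i ℂ^n`; here the index `i` runs through `1,…,n` as `(i:ℕ)+1` for `i : Fin n`.
These are the components of the point `r_n ∈ W_n = ⨁_{i=1}^n Λ^i ℂ^n`. -/
def rComp {n : ℕ} (i : Fin n) : ExtP n ((i : ℕ) + 1) :=
  wedgeBasis _ (Finset.Iic i) (by simp)

/-- Index type for the standard basis of `⨂_{i=1}^n Λ^i ℂ^n`. -/
abbrev TIdx (n : ℕ) := (i : Fin n) → SubK n ((i : ℕ) + 1)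

/-- Coordinates of `ẽ_n = e_1 ⊗ (e_1∧e_2) ⊗ … ⊗ (e_1∧…∧e_n) ∈ ⨂_{i=1}^n Λ^i ℂ^n`:
the coordinates of a pure tensor are the products of the coordinates of its factors. -/
def eTilde {n : ℕ} : TIdx n → ℂ := fun f => ∏ i : Fin n, rComp i (f i)

/-- Index type for the standard basis of the `j`-th component
`Λ^{|S_j|} ℂ^n ⊗ (⨂_{i=1}^n Λ^i ℂ^n)^{⊗ α_j}` of `V_{S,α}`. -/
abbrev VIdx (n : ℕ) (S : Finset (Fin n × Fin n)) (α : Fin n → ℕ) (j : Fin n) :=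
  SubK n ((colS S j).card) × (Fin (α j) → TIdx n)

/-- Coordinates of the `j`-th component `(⋀_{i∈S_j} e_i) ⊗ ẽ_n^{⊗α_j}` of `q_{S,α}`. -/
def qComp {n : ℕ} (S : Finset (Fin n × Fin n)) (α : Fin n → ℕ) (j : Fin n) :
    VIdx n S α j → ℂ :=
  fun p => wedgeBasis _ (colS S j) rfl p.1 * ∏ a : Fin (α j), eTilde (p.2 a)

/-- Matrix entry of the action of `g` on `⨂_{i=1}^n Λ^i ℂ^n` (the diagonal action via
the exterior powers of the standard action). -/
def tenMinor {n : ℕ} (g : Matrix (Fin n) (Fin n) ℂ) (f f' : TIdx n) : ℂ :=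
  ∏ i : Fin n, gminor _ g (f i) (f' i)

/-- The action of `g` on the `j`-th component of `V_{S,α}`, i.e. on
`Λ^{|S_j|} ℂ^n ⊗ (⨂_{i=1}^n Λ^i ℂ^n)^{⊗ α_j}`, in standard coordinates. -/
def vAct {n : ℕ} (S : Finset (Fin n × Fin n)) (α : Fin n → ℕ) (j : Fin n)
    (g : Matrix (Fin n) (Fin n) ℂ) (x : VIdx n S α j → ℂ) : VIdx n S α j → ℂ :=
  fun p => ∑ p' : VIdx n S α j,
    (gminor _ g p.1 p'.1 * ∏ a : Fin (α j), tenMinor g (p.2 a) (p'.2 a)) * x p'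

/-!
The coordinates of `g • ⋀_{t∈T} e_t ∈ Λ^k ℂ^n` are the `k × k` minors of `g` with columns
`T`. So `g` fixes `⋀_{t∈T} e_t` iff it preserves `span {e_t : t ∈ T}` and its minor on
`T × T` is `1`: if the minors with columns `T` vanish off the rows `T`, then for `c ∈ T`,
`r ∉ T` the minor with rows `T ∪ {r}` and columns `(c, T)` has a repeated column, and its
Laplace expansion along the first column reduces to `± g r c`.

Applied to the flag `e_1 ∧ … ∧ e_i`, this makes the stabiliser of `r_n` the upper
unitriangular group. Such a `g` fixes `ẽ_n`, so it fixes `q_{S,α}` iff it fixes every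
`⋀_{i∈S_j} e_i`, i.e. preserves every `span {e_i : i ∈ S_j}`; for upper triangular `g` and
closed `S` this means `g i j = 0` whenever `i < j` and `(i, j) ∉ S`.
-/

namespace StabilizerUS

variable {n : ℕ}

def PreservesCoordSpan (g : Matrix (Fin n) (Fin n) ℂ) (T : Finset (Fin n)) : Prop :=
  ∀ c ∈ T, ∀ r ∉ T, g r c = 0

section SubK

variable {k : ℕ}

lemma enumK_strictMono (C : SubK n k) : StrictMono (enumK C) :=
  (C.1.orderEmbOfFin C.2).strictMono

lemma enumK_mem (C : SubK n k) (a : Fin k) : enumK C a ∈ C.1 :=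
  Finset.orderEmbOfFin_mem _ C.2 _

lemma exists_enumK_eq (C : SubK n k) {x : Fin n} (hx : x ∈ C.1) : ∃ a, enumK C a = x := by
  obtain ⟨a, ha⟩ := (C.1.orderIsoOfFin C.2).surjective ⟨x, hx⟩
  exact ⟨a, congrArg Subtype.val ha⟩

lemma prod_enumK (C : SubK n k) (d : Fin n → ℂ) :
    ∏ a, d (enumK C a) = ∏ t ∈ C.1, d t := by
  rw [← Finset.prod_coe_sort C.1 d]
  exact Fintype.prod_equiv (C.1.orderIsoOfFin C.2).toEquiv _ _ fun _ => rfl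

lemma exists_mem_notMem_of_ne {C D : SubK n k} (h : C ≠ D) : ∃ r ∈ C.1, r ∉ D.1 := by
  by_contra! hCD
  exact h (Subtype.ext (Finset.eq_of_subset_of_card_le hCD (by rw [C.2, D.2])))

def eraseK (C : SubK n (k + 1)) (i : Fin (k + 1)) : SubK n k :=
  ⟨C.1.erase (enumK C i), by rw [Finset.card_erase_of_mem (enumK_mem C i), C.2]; rfl⟩

lemma enumK_eraseK (C : SubK n (k + 1)) (i : Fin (k + 1)) :
    enumK (eraseK C i) = enumK C ∘ i.succAbove :=
  (Finset.orderEmbOfFin_unique (eraseK C i).2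
    (fun a => Finset.mem_erase.mpr ⟨(enumK_strictMono C).injective.ne (i.succAbove_ne a),
      enumK_mem C _⟩)
    ((enumK_strictMono C).comp i.strictMono_succAbove)).symm

end SubK

variable (g : Matrix (Fin n) (Fin n) ℂ)

section Minors

variable {k : ℕ}

lemma gminor_eq_zero_of_preserves {C D : SubK n k} (hg : PreservesCoordSpan g D.1)
    (hCD : C ≠ D) : gminor k g C D = 0 := by
  obtain ⟨r, hrC, hrD⟩ := exists_mem_notMem_of_ne hCD
  obtain ⟨a, rfl⟩ := exists_enumK_eq C hrC
  exact det_eq_zero_of_row_eq_zero a fun b => hg _ (enumK_mem D b) _ hrD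

lemma gminor_self_of_isUpperTriangular (hg : g.IsUpperTriangular) (D : SubK n k) :
    gminor k g D D = ∏ t ∈ D.1, g t t := by
  refine (det_of_isUpperTriangular fun a b hba => ?_).trans (prod_enumK D fun t => g t t)
  exact hg (enumK_strictMono D hba)

lemma det_submatrix_cons_eq_sum (C : SubK n (k + 1)) (c : Fin n) (D : SubK n k) :
    (g.submatrix (enumK C) (Fin.cons c (enumK D))).det =
      ∑ i : Fin (k + 1), (-1) ^ (i : ℕ) * g (enumK C i) c * gminor k g (eraseK C i) D := by
  rw [det_succ_column_zero]
  refine Finset.sum_congr rfl fun i _ => ?_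
  rw [gminor, enumK_eraseK]
  rfl

lemma preservesCoordSpan_of_gminor {D : SubK n k} (h0 : ∀ C, C ≠ D → gminor k g C D = 0)
    (h1 : gminor k g D D ≠ 0) : PreservesCoordSpan g D.1 := by
  intro c hc r hr
  let C : SubK n (k + 1) := ⟨insert r D.1, by rw [Finset.card_insert_of_notMem hr, D.2]⟩
  obtain ⟨b, rfl⟩ := exists_enumK_eq D hc
  obtain ⟨i₀, hi₀⟩ := exists_enumK_eq C (Finset.mem_insert_self r _)
  have hdet : (g.submatrix (enumK C) (Fin.cons (enumK D b) (enumK D))).det = 0 :=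
    det_zero_of_column_eq (Fin.succ_ne_zero b).symm fun a => by simp
  have herase : eraseK C i₀ = D :=
    Subtype.ext (by simp only [eraseK, hi₀, C, Finset.erase_insert hr])
  rw [det_submatrix_cons_eq_sum, Finset.sum_eq_single i₀, herase, hi₀] at hdet
  · simpa [h1] using hdet
  · intro i _ hi
    refine mul_eq_zero_of_right _ (h0 _ fun h => hr ?_)
    rw [← h, eraseK, Finset.mem_erase, ← hi₀]
    exact ⟨(enumK_strictMono C).injective.ne (Ne.symm hi), enumK_mem C i₀⟩
  · simp

end Minors

section ExteriorPower

variable {k : ℕ}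

lemma wedgeBasis_eq_single (C : Finset (Fin n)) (h : C.card = k) :
    wedgeBasis k C h = Pi.single ⟨C, h⟩ 1 := by
  have hone (D : SubK n k) : wedgeBasis k C h D = gminor k 1 D ⟨C, h⟩ := by
    simp only [wedgeBasis, wedgeFam, gminor, stdVec, Pi.single_apply, one_apply]
    rfl
  funext D
  rw [hone, Pi.single_apply]
  split_ifs with hD
  · rw [hD, gminor_self_of_isUpperTriangular _ blockTriangular_one,
      Finset.prod_eq_one fun t _ => one_apply_eq t]
  · refine gminor_eq_zero_of_preserves 1 (fun c hc r hr => one_apply_ne ?_) hD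
    rintro rfl
    exact hr hc

lemma extAct_single (D C : SubK n k) : extAct k g (Pi.single D 1) C = gminor k g C D := by
  simp [extAct, Pi.single_apply]

theorem extAct_wedgeBasis_eq_self_iff (T : Finset (Fin n)) (h : T.card = k) :
    extAct k g (wedgeBasis k T h) = wedgeBasis k T h ↔
      PreservesCoordSpan g T ∧ gminor k g ⟨T, h⟩ ⟨T, h⟩ = 1 := by
  simp only [wedgeBasis_eq_single, funext_iff, extAct_single, Pi.single_apply]
  constructor
  · intro hg
    have h1 : gminor k g ⟨T, h⟩ ⟨T, h⟩ = 1 := by simpa using hg ⟨T, h⟩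
    refine ⟨preservesCoordSpan_of_gminor g (D := ⟨T, h⟩) (fun C hC => ?_) (h1 ▸ one_ne_zero),
      h1⟩
    simpa [hC] using hg C
  · rintro ⟨hT, h1⟩ C
    split_ifs with hC
    · rwa [hC]
    · exact gminor_eq_zero_of_preserves g hT hC

end ExteriorPower

lemma forall_preservesCoordSpan_Iic_iff :
    (∀ i, PreservesCoordSpan g (Finset.Iic i)) ↔ g.IsUpperTriangular := by
  constructor
  · intro h r c hcr
    exact h c c (Finset.mem_Iic.2 le_rfl) r (by simpa using hcr)
  · intro hg i c hc r hr
    exact hg ((Finset.mem_Iic.1 hc).trans_lt (by simpa using hr))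

lemma forall_prod_Iic_eq_one_iff {ι M : Type*} [LinearOrder ι] [LocallyFiniteOrderBot ι]
    [WellFoundedLT ι] [CommMonoid M] (d : ι → M) :
    (∀ i, ∏ t ∈ Finset.Iic i, d t = 1) ↔ ∀ i, d i = 1 := by
  refine ⟨fun h i => ?_, fun h i => Finset.prod_eq_one fun t _ => h t⟩
  induction i using WellFoundedLT.induction with
  | _ i ih =>
    have hi := h i
    rwa [← Finset.Iio_insert, Finset.prod_insert Finset.notMem_Iio_self,
      Finset.prod_eq_one fun t ht => ih t (Finset.mem_Iio.1 ht), mul_one] at hi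

theorem forall_extAct_rComp_eq_self_iff :
    (∀ i : Fin n, extAct _ g (rComp i) = rComp i) ↔
      g.IsUpperTriangular ∧ ∀ i, g i i = 1 := by
  simp only [rComp, extAct_wedgeBasis_eq_self_iff, forall_and, forall_preservesCoordSpan_Iic_iff]
  refine and_congr_right fun hg => ?_
  simp only [gminor_self_of_isUpperTriangular g hg]
  exact forall_prod_Iic_eq_one_iff _

lemma mem_colS {S : Finset (Fin n × Fin n)} {i j : Fin n} :
    i ∈ colS S j ↔ i = j ∨ (i, j) ∈ S := by
  simp [colS]

lemma forall_preservesCoordSpan_colS_iff {S : Finset (Fin n × Fin n)}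
    (hS : ∀ a b c, (a, b) ∈ S → (b, c) ∈ S → (a, c) ∈ S) (hg : g.IsUpperTriangular) :
    (∀ j, PreservesCoordSpan g (colS S j)) ↔ ∀ i j, i < j → (i, j) ∉ S → g i j = 0 := by
  constructor
  · intro h i j hij hij'
    refine h j j (mem_colS.2 (Or.inl rfl)) i ?_
    rw [mem_colS]
    rintro (rfl | hij'')
    exacts [hij.ne rfl, hij' hij'']
  · intro h j c hc r hr
    rcases lt_trichotomy r c with hrc | rfl | hcr
    · refine h r c hrc fun hrcS => hr (mem_colS.2 (Or.inr ?_))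
      rcases mem_colS.1 hc with rfl | hcj
      exacts [hrcS, hS _ _ _ hrcS hcj]
    · exact absurd hc hr
    · exact hg hcr

section TensorPower

variable (S : Finset (Fin n × Fin n)) (α : Fin n → ℕ) (j : Fin n)

lemma vAct_qComp (p : VIdx n S α j) :
    vAct S α j g (qComp S α j) p =
      extAct _ g (wedgeBasis _ (colS S j) rfl) p.1 *
        ∏ a, ∏ i, extAct _ g (rComp i) (p.2 a i) := by
  rw [vAct, Fintype.sum_prod_type]
  simp only [extAct, qComp, eTilde, tenMinor, Fintype.prod_sum, Finset.sum_mul_sum,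
    Finset.prod_mul_distrib]
  exact Finset.sum_congr rfl fun D _ => Finset.sum_congr rfl fun F _ => by ring

theorem vAct_qComp_eq_self_iff (hr : ∀ i : Fin n, extAct _ g (rComp i) = rComp i) :
    vAct S α j g (qComp S α j) = qComp S α j ↔
      extAct _ g (wedgeBasis _ (colS S j) rfl) = wedgeBasis _ (colS S j) rfl := by
  simp only [funext_iff, vAct_qComp, hr, Prod.forall]
  refine ⟨fun h D => ?_, fun h D F => by rw [h]; rfl⟩
  simpa [qComp, eTilde, rComp, wedgeBasis_eq_single] using
    h D fun _ i => ⟨Finset.Iic i, by simp⟩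

end TensorPower

end StabilizerUS

open StabilizerUS

theorem stmt2_general {n : ℕ} (S : Finset (Fin n × Fin n)) (hS : PairsClosed S)
    (α : Fin n → ℕ)
    (g : Matrix.SpecialLinearGroup (Fin n) ℂ) :
    ((∀ j : Fin n, vAct S α j g.val (qComp S α j) = qComp S α j) ∧
      (∀ i : Fin n, extAct ((i : ℕ) + 1) g.val (rComp i) = rComp i))
      ↔ g ∈ USet S := by
  have hcol (hg : g.val.IsUpperTriangular) (hdiag : ∀ i, g.val i i = 1) (j : Fin n) :
      extAct _ g.val (wedgeBasis _ (colS S j) rfl) = wedgeBasis _ (colS S j) rfl ↔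
        PreservesCoordSpan g.val (colS S j) := by
    rw [extAct_wedgeBasis_eq_self_iff, gminor_self_of_isUpperTriangular _ hg,
      Finset.prod_eq_one fun t _ => hdiag t, and_iff_left rfl]
  constructor
  · rintro ⟨hq, hr⟩
    obtain ⟨hg, hdiag⟩ := (forall_extAct_rComp_eq_self_iff g.val).1 hr
    refine ⟨hg, hdiag, (forall_preservesCoordSpan_colS_iff g.val hS.2 hg).1 fun j => ?_⟩
    exact (hcol hg hdiag j).1 ((vAct_qComp_eq_self_iff g.val S α j hr).1 (hq j))
  · rintro ⟨hg, hdiag, hzero⟩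
    have hr := (forall_extAct_rComp_eq_self_iff g.val).2 ⟨hg, hdiag⟩
    refine ⟨fun j => (vAct_qComp_eq_self_iff g.val S α j hr).2 ((hcol hg hdiag j).2 ?_), hr⟩
    exact (forall_preservesCoordSpan_colS_iff g.val hS.2 hg).2 hzero j

/-- For every `α ∈ (ℤ_{>0})^n` and every `g ∈ SL_n(ℂ)`, `g` fixes the
point `p_{S,α} = q_{S,α} ⊕ r_n ∈ W_{S,α} = V_{S,α} ⊕ W_n` (i.e. `g` fixes each
component `(⋀_{i∈S_j} e_i) ⊗ ẽ_n^{⊗α_j}` of `q_{S,α}` and each component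
`e_1∧…∧e_i` of `r_n`) if and only if `g ∈ U_S`: the stabiliser of `p_{S,α}` in
`SL_n(ℂ)` is `U_S`. -/
theorem stmt2 {n : ℕ} (hn : 1 ≤ n) (S : Finset (Fin n × Fin n)) (hS : PairsClosed S)
    (α : Fin n → ℕ) (hα : ∀ i, 0 < α i)
    (g : Matrix.SpecialLinearGroup (Fin n) ℂ) :
    ((∀ j : Fin n, vAct S α j g.val (qComp S α j) = qComp S α j) ∧
      (∀ i : Fin n, extAct ((i : ℕ) + 1) g.val (rComp i) = rComp i))
      ↔ g ∈ USet S :=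
  stmt2_general S hS α g

end
end

section
/- Let n ≥ 1, let σ be a permutation of {1,…,n}, and for each m ∈ ℕ let b_{11}^{(m)},…,b_{nn}^{(m)} be nonzero complex numbers. Assume that for each i ∈ {1,…,n} the sequence m ↦ b_{σ(1)σ(1)}^{(m)}·b_{σ(2)σ(2)}^{(m)}⋯b_{σ(i)σ(i)}^{(m)} converges in ℂ, and that there exists s ∈ {1,…,n} with lim_{m→∞} b_{ss}^{(m)} = 0. Define 𝒞_m := (b_{σ(1)σ(1)}^{(m)})^n (b_{σ(2)σ(2)}^{(m)})^{n−1} ⋯ (b_{σ(n)σ(n)}^{(m)})^1. Then lim_{m→∞} 𝒞_m = 0, and for every j ∈ {1,…,n} one has lim_{m→∞} 𝒞_m² · b_{jj}^{(m)} = 0 and lim_{m→∞} 𝒞_m² / b_{jj}^{(m)} = 0. -/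
/-!
With the partial products `P_i := b_{σ(1)} ⋯ b_{σ(i)}` (and `P_0 = 1`) one has
`𝒞 = P_1 ⋯ P_n` and `b_{σ(i)} = P_i / P_{i-1}`. If `σ(t) = s`, then `P_t = b_s P_{t-1} → 0`,
so `𝒞 → 0`. Moreover `𝒞² b_{σ(i)} = 𝒞 · (𝒞 / P_{i-1}) · P_i` and
`𝒞² / b_{σ(i)} = 𝒞 · (𝒞 / P_i) · P_{i-1}`, where `𝒞 / P_k` is the product of the remaining
partial products; so both are `𝒞` times a convergent sequence.
-/

open Filter Topology Finset

theorem Finset.prod_prod_Iic_eq_prod_pow_card_Ici {ι M : Type*} [LinearOrder ι] [Fintype ι]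
    [LocallyFiniteOrderBot ι] [LocallyFiniteOrderTop ι] [CommMonoid M] (f : ι → M) :
    ∏ i, ∏ k ∈ Iic i, f k = ∏ i, f i ^ #(Ici i) := by
  rw [prod_comm' (t' := univ) (s' := Ici) (by simp)]
  simp only [prod_const]

lemma exists_tendsto_prod_Iio {α ι M : Type*} [LinearOrder ι] [LocallyFiniteOrderBot ι]
    [PredOrder ι] [CommMonoid M] [TopologicalSpace M] {l : Filter α} {a : α → ι → M}
    (hconv : ∀ i, ∃ L, Tendsto (fun x => ∏ k ∈ Iic i, a x k) l (𝓝 L)) (i : ι) :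
    ∃ L, Tendsto (fun x => ∏ k ∈ Iio i, a x k) l (𝓝 L) := by
  by_cases hi : IsMin i
  · exact ⟨1, by simp [Finset.Iio_eq_empty.2 hi, tendsto_const_nhds]⟩
  · simpa [← Finset.Iic_pred_eq_Iio_of_not_isMin hi] using hconv (Order.pred i)

section PartialProducts

variable {α ι K : Type*} [Fintype ι] [Field K] [TopologicalSpace K] [ContinuousMul K]
  {l : Filter α}

lemma tendsto_prod_of_tendsto_zero {P : ι → α → K} (hP : ∀ i, ∃ L, Tendsto (P i) l (𝓝 L))
    {t : ι} (ht : Tendsto (P t) l (𝓝 0)) :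
    Tendsto (fun x => ∏ i, P i x) l (𝓝 0) := by
  classical
  choose L hL using hP
  simpa using (ht.mul (tendsto_finsetProd (univ.erase t) fun i _ => hL i)).congr fun x =>
    mul_prod_erase _ (P · x) (mem_univ t)

lemma exists_tendsto_prod_div {P : ι → α → K} (hP : ∀ i, ∃ L, Tendsto (P i) l (𝓝 L))
    (hne : ∀ i x, P i x ≠ 0) (j : ι) :
    ∃ L, Tendsto (fun x => (∏ i, P i x) / P j x) l (𝓝 L) := by
  classical
  choose L hL using hP
  refine ⟨∏ i ∈ univ.erase j, L i, (tendsto_finsetProd _ fun i _ => hL i).congr fun x => ?_⟩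
  rw [eq_div_iff (hne j x), prod_erase_mul _ _ (mem_univ j)]

variable [LinearOrder ι] [LocallyFiniteOrderBot ι] [PredOrder ι] {a : α → ι → K}
  (hconv : ∀ i, ∃ L, Tendsto (fun x => ∏ k ∈ Iic i, a x k) l (𝓝 L))
include hconv

lemma exists_tendsto_prod_prod_Iic_div_prod_Iio (hne : ∀ x i, a x i ≠ 0) (i : ι) :
    ∃ L, Tendsto (fun x => (∏ j, ∏ k ∈ Iic j, a x k) / ∏ k ∈ Iio i, a x k) l (𝓝 L) := by
  by_cases hi : IsMin i
  · choose L hL using hconv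
    exact ⟨∏ j, L j, by simpa [Finset.Iio_eq_empty.2 hi] using tendsto_finsetProd _ fun j _ => hL j⟩
  · rw [← Finset.Iic_pred_eq_Iio_of_not_isMin hi]
    exact exists_tendsto_prod_div hconv (fun j x => prod_ne_zero_iff.2 fun k _ => hne x k) _

lemma tendsto_prod_prod_Iic_of_tendsto_zero {t : ι} (ht : Tendsto (fun x => a x t) l (𝓝 0)) :
    Tendsto (fun x => ∏ j, ∏ k ∈ Iic j, a x k) l (𝓝 0) := by
  obtain ⟨M, hM⟩ := exists_tendsto_prod_Iio hconv t
  refine tendsto_prod_of_tendsto_zero hconv (t := t) ?_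
  simpa [mul_prod_Iio_eq_prod_Iic] using ht.mul hM

variable (hne : ∀ x i, a x i ≠ 0) {t : ι} (ht : Tendsto (fun x => a x t) l (𝓝 0)) (i : ι)
include hne ht

lemma tendsto_sq_prod_prod_Iic_mul_of_tendsto_zero :
    Tendsto (fun x => (∏ j, ∏ k ∈ Iic j, a x k) ^ 2 * a x i) l (𝓝 0) := by
  obtain ⟨D, hD⟩ := exists_tendsto_prod_prod_Iic_div_prod_Iio hconv hne i
  obtain ⟨P, hP⟩ := hconv i
  simpa using (((tendsto_prod_prod_Iic_of_tendsto_zero hconv ht).mul hD).mul hP).congr fun x => by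
    rw [← mul_prod_Iio_eq_prod_Iic]
    field_simp [prod_ne_zero_iff.2 fun k _ => hne x k]

lemma tendsto_sq_prod_prod_Iic_div_of_tendsto_zero :
    Tendsto (fun x => (∏ j, ∏ k ∈ Iic j, a x k) ^ 2 / a x i) l (𝓝 0) := by
  have hP : ∀ j x, ∏ k ∈ Iic j, a x k ≠ 0 := fun j x => prod_ne_zero_iff.2 fun k _ => hne x k
  obtain ⟨E, hE⟩ := exists_tendsto_prod_div hconv hP i
  obtain ⟨Q, hQ⟩ := exists_tendsto_prod_Iio hconv i
  simpa using (((tendsto_prod_prod_Iic_of_tendsto_zero hconv ht).mul hE).mul hQ).congr fun x => by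
    rw [← mul_prod_Iio_eq_prod_Iic]
    field_simp [hne x i, prod_ne_zero_iff.2 fun k _ => hne x k]

end PartialProducts

theorem stmt4_general {n : ℕ} (σ : Equiv.Perm (Fin n)) (b : ℕ → Fin n → ℂ)
    (hne : ∀ m (i : Fin n), b m i ≠ 0)
    (hconv : ∀ i : Fin n, ∃ L : ℂ,
      Tendsto (fun m => ∏ k ∈ Finset.Iic i, b m (σ k)) atTop (𝓝 L))
    (s : Fin n) (hs : Tendsto (fun m => b m s) atTop (𝓝 0))
    (C : ℕ → ℂ) (hC : ∀ m, C m = ∏ i : Fin n, (b m (σ i)) ^ (n - (i : ℕ))) :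
    Tendsto C atTop (𝓝 0) ∧
      ∀ j : Fin n,
        Tendsto (fun m => (C m) ^ 2 * b m j) atTop (𝓝 0) ∧
        Tendsto (fun m => (C m) ^ 2 / b m j) atTop (𝓝 0) := by
  obtain rfl : C = fun m => ∏ i, ∏ k ∈ Iic i, b m (σ k) := funext fun m => by
    simp [hC, prod_prod_Iic_eq_prod_pow_card_Ici, Fin.card_Ici]
  have hne' : ∀ m k, b m (σ k) ≠ 0 := fun m k => hne m (σ k)
  have hs' : Tendsto (fun m => b m (σ (σ.symm s))) atTop (𝓝 0) := by simpa using hs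
  refine ⟨tendsto_prod_prod_Iic_of_tendsto_zero hconv hs', fun j => ?_⟩
  obtain ⟨i, rfl⟩ := σ.surjective j
  exact ⟨tendsto_sq_prod_prod_Iic_mul_of_tendsto_zero hconv hne' hs' i,
    tendsto_sq_prod_prod_Iic_div_of_tendsto_zero hconv hne' hs' i⟩

/-- Same as Statement 3, but the partial products and the weighted
product `𝒞_m` are taken along a permutation `σ` of `{1,…,n}`:
`𝒞_m := (b_{σ(1)σ(1)}^{(m)})^n ⋯ (b_{σ(n)σ(n)}^{(m)})^1`. If each partial product
`m ↦ b_{σ(1)σ(1)}^{(m)}⋯b_{σ(i)σ(i)}^{(m)}` converges and some diagonal sequence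
`m ↦ b_{ss}^{(m)}` tends to `0`, then `𝒞_m → 0` and, for every `j`,
`𝒞_m² · b_{jj}^{(m)} → 0` and `𝒞_m² / b_{jj}^{(m)} → 0`. -/
theorem stmt4 {n : ℕ} (hn : 1 ≤ n) (σ : Equiv.Perm (Fin n)) (b : ℕ → Fin n → ℂ)
    (hne : ∀ m (i : Fin n), b m i ≠ 0)
    (hconv : ∀ i : Fin n, ∃ L : ℂ,
      Tendsto (fun m => ∏ k ∈ Finset.Iic i, b m (σ k)) atTop (𝓝 L))
    (s : Fin n) (hs : Tendsto (fun m => b m s) atTop (𝓝 0))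
    (C : ℕ → ℂ) (hC : ∀ m, C m = ∏ i : Fin n, (b m (σ i)) ^ (n - (i : ℕ))) :
    Tendsto C atTop (𝓝 0) ∧
      ∀ j : Fin n,
        Tendsto (fun m => (C m) ^ 2 * b m j) atTop (𝓝 0) ∧
        Tendsto (fun m => (C m) ^ 2 / b m j) atTop (𝓝 0) :=
  stmt4_general σ b hne hconv s hs C hC
end

section
/- Let S be a closed set of pairs and let b be an upper triangular n×n complex matrix such that b_{ij} = 0 whenever i ∈ S_j and i ≠ j. Let s, t ∈ {1,…,n} with s ∉ S_t, and set C := (S_t∖{t}) ∪ {s}. Let f_C be the linear functional on Λ^{|S_t|}ℂ^n reading off the coordinate of the standard basis vector ⋀_{i∈C} e_i. Then f_C( ⋀_{i∈S_t}(b e_i) ) = ε · b_{st} · ∏_{i∈S_t∖{t}} b_{ii}, where ε ∈ {1,−1} is the sign determined by (⋀_{i∈S_t∖{t}} e_i) ∧ e_s = ε · ⋀_{i∈C} e_i. In other words, the component of ⋀_{i∈S_t}(b e_i) along (⋀_{i∈S_t∖{t}} e_i) ∧ e_s equals b_{st} · ∏_{i∈S_t∖{t}} b_{ii}. -/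
open Matrix Filter Topology

noncomputable section

/-!
Let `d` list `S_t ∖ {t}` increasingly and then `s`. Since `d` enumerates `C`, the `C × S_t`
minor of `b` is the product of the permutation matrix comparing `d` with the increasing
enumeration of `C` (whose determinant is `ε` by hypothesis) and the matrix `T` with rows `d` and
columns `S_t` in increasing order. As `t` is the largest element of `S_t` and `b_{it} = 0` for
`i ∈ S_t ∖ {t}`, the last column of `T` vanishes off the corner `b_{st}`; expanding along it leaves
the minor of `b` on `S_t ∖ {t}`, which is upper triangular with diagonal `b_{ii}`.
-/

open Finset

theorem Matrix.det_snoc_snoc_of_isUpperTriangular {R ι : Type*} [CommRing R] [LinearOrder ι]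
    {m : ℕ} (b : Matrix ι ι R) (hb : b.IsUpperTriangular) {e : Fin m → ι} (he : StrictMono e)
    (s t : ι) (het : ∀ a, b (e a) t = 0) :
    det (of fun a c : Fin (m + 1) ↦
        b (Fin.snoc (α := fun _ ↦ ι) e s a) (Fin.snoc (α := fun _ ↦ ι) e t c))
      = b s t * ∏ a, b (e a) (e a) := by
  rw [det_succ_column _ (Fin.last m), Fintype.sum_eq_single (Fin.last m)]
  · simp only [of_apply, Fin.snoc_last, Fin.succAbove_last, Fin.val_last, ← two_mul, pow_mul,
      neg_one_sq, one_pow, one_mul]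
    rw [det_of_isUpperTriangular]
    · simp [Fin.snoc_castSucc]
    · intro a c hca
      simpa [Fin.snoc_castSucc] using hb (he hca)
  · intro a ha
    obtain ⟨a, rfl⟩ := Fin.exists_castSucc_eq.2 ha
    simp [het]

theorem Fin.strictMono_snoc {α : Type*} [Preorder α] {m : ℕ} {e : Fin m → α} (he : StrictMono e)
    {x : α} (hx : ∀ a, e a < x) : StrictMono (Fin.snoc (α := fun _ ↦ α) e x) := by
  intro i j hij
  induction j using Fin.lastCases with
  | last =>
    obtain ⟨i, rfl⟩ := Fin.exists_castSucc_eq.2 hij.ne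
    simpa using hx i
  | cast j =>
    obtain ⟨i, rfl⟩ := Fin.exists_castSucc_eq.2 (hij.trans (Fin.castSucc_lt_last j)).ne
    simpa using he (Fin.castSucc_lt_castSucc_iff.1 hij)

variable {n : ℕ}

theorem mem_colS_self (S : Finset (Fin n × Fin n)) (j : Fin n) : j ∈ colS S j :=
  mem_insert_self _ _

theorem le_of_mem_colS {S : Finset (Fin n × Fin n)} (hS : ∀ p ∈ S, p.1 < p.2) {i j : Fin n}
    (hi : i ∈ colS S j) : i ≤ j := by
  simp only [colS, mem_insert, mem_image, mem_filter] at hi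
  rcases hi with rfl | ⟨p, ⟨hp, rfl⟩, rfl⟩
  exacts [le_rfl, (hS p hp).le]

theorem Finset.orderEmbOfFin_eq_snoc_erase {α : Type*} [LinearOrder α] {D : Finset α} {m : ℕ}
    (hD : D.card = m + 1) {t : α} (ht : t ∈ D) (hmax : ∀ i ∈ D, i ≤ t)
    (hE : (D.erase t).card = m) :
    ⇑(D.orderEmbOfFin hD) = Fin.snoc (α := fun _ ↦ α) ((D.erase t).orderEmbOfFin hE) t := by
  refine (orderEmbOfFin_unique hD (fun c ↦ ?_) (Fin.strictMono_snoc (OrderEmbedding.strictMono _)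
    fun a ↦ ?_)).symm
  · induction c using Fin.lastCases with
    | last => simpa using ht
    | cast a => simpa using mem_of_mem_erase (orderEmbOfFin_mem _ hE a)
  · have ha := orderEmbOfFin_mem _ hE a
    exact (hmax _ (mem_of_mem_erase ha)).lt_of_ne (ne_of_mem_erase ha)

theorem Finset.prod_orderEmbOfFin {α M : Type*} [LinearOrder α] [CommMonoid M] (s : Finset α)
    {k : ℕ} (h : s.card = k) (f : α → M) : ∏ a, f (s.orderEmbOfFin h a) = ∏ i ∈ s, f i := by
  conv_rhs => rw [← map_orderEmbOfFin_univ s h, prod_map]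
  rfl

theorem wedgeBasis_apply_self {k : ℕ} (C : Finset (Fin n)) (h : C.card = k) :
    wedgeBasis k C h ⟨C, h⟩ = 1 := by
  have hone : (of fun a c ↦ stdVec (C.orderIsoOfFin h c : Fin n) (enumK ⟨C, h⟩ a)) = 1 := by
    ext a c
    simp [enumK, stdVec, Pi.single_apply, one_apply, eq_comm]
  rw [wedgeBasis, wedgeFam, hone, det_one]

theorem wedgeFam_apply_eq_mul_det {k : ℕ} (v : Fin k → Fin n → ℂ) (C : SubK n k)
    {d : Fin k → Fin n} (hd : Function.Injective d) (hC : (C.1 : Set (Fin n)) ⊆ Set.range d) :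
    wedgeFam k v C
      = wedgeFam k (fun a ↦ stdVec (d a)) C * det (of fun a c ↦ v c (d a)) := by
  rw [wedgeFam, wedgeFam, ← det_mul]
  congr 1
  ext a c
  obtain ⟨a', ha'⟩ := hC (C.1.orderEmbOfFin_mem C.2 a)
  rw [of_apply, mul_apply, Fintype.sum_eq_single a']
  · simp [stdVec, enumK, ha']
  · intro b hb
    simp [stdVec, enumK, ← ha', hd.ne hb]

theorem colWedge_apply_insert_erase {k : ℕ} (b : Matrix (Fin n) (Fin n) ℂ)
    (hb : b.IsUpperTriangular) {D : Finset (Fin n)} (hD : D.card = k) {t : Fin n} (ht : t ∈ D)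
    (hmax : ∀ i ∈ D, i ≤ t) (hbt : ∀ i ∈ D, i ≠ t → b i t = 0) {s : Fin n} (hs : s ∉ D)
    (hC : (insert s (D.erase t)).card = k) :
    colWedge k b D hD ⟨insert s (D.erase t), hC⟩
      = wedgeFam k (fun a ↦ if h : (a : ℕ) < (D.erase t).card then
            stdVec ((D.erase t).orderIsoOfFin rfl ⟨(a : ℕ), h⟩)
          else stdVec s) ⟨insert s (D.erase t), hC⟩
        * (b s t * ∏ i ∈ D.erase t, b i i) := by
  set E := D.erase t
  obtain rfl : k = E.card + 1 := by rw [← hD, card_erase_add_one ht]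
  set e := E.orderEmbOfFin rfl
  have hd : (fun a : Fin (E.card + 1) ↦ if h : (a : ℕ) < E.card then
        stdVec (E.orderIsoOfFin rfl ⟨(a : ℕ), h⟩) else stdVec s)
      = fun a ↦ stdVec (Fin.snoc (α := fun _ ↦ Fin n) e s a) := by
    funext a
    induction a using Fin.lastCases with
    | last => simp
    | cast a => simp [e]
  have hsE : s ∉ Set.range e := by simpa [e, E] using fun h ↦ absurd h hs
  rw [hd, colWedge, wedgeFam_apply_eq_mul_det _ _ (Fin.snoc_injective_of_injective e.injective hsE)
    (by simp [e, E])]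
  congr 1
  simp only [stdVec, mulVec_single_one, col_apply, coe_orderIsoOfFin_apply,
    orderEmbOfFin_eq_snoc_erase hD ht hmax rfl]
  have hbe : ∀ a, b (e a) t = 0 := fun a ↦
    have ha := orderEmbOfFin_mem E rfl a
    hbt _ (mem_of_mem_erase ha) (ne_of_mem_erase ha)
  rw [det_snoc_snoc_of_isUpperTriangular b hb e.strictMono s t hbe,
    prod_orderEmbOfFin E rfl fun i ↦ b i i]

theorem stmt5_general {n : ℕ} (S : Finset (Fin n × Fin n)) (hS : PairsClosed S)
    (b : Matrix (Fin n) (Fin n) ℂ)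
    (hut : ∀ i j : Fin n, j < i → b i j = 0)
    (hz : ∀ i j : Fin n, i ∈ colS S j → i ≠ j → b i j = 0)
    (s t : Fin n) (hs : s ∉ colS S t)
    (C : Finset (Fin n)) (hCdef : C = insert s ((colS S t).erase t))
    (hCc : C.card = (colS S t).card)
    (ε : ℂ)
    (hε : wedgeFam (colS S t).card
        (fun a => if h : (a : ℕ) < ((colS S t).erase t).card then
            stdVec (((colS S t).erase t).orderIsoOfFin rfl ⟨(a : ℕ), h⟩)
          else stdVec s)
        = ε • wedgeBasis (colS S t).card C hCc) :
    colWedge (colS S t).card b (colS S t) rfl ⟨C, hCc⟩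
      = ε * b s t * ∏ i ∈ (colS S t).erase t, b i i := by
  subst hCdef
  have hεC := congrFun hε ⟨_, hCc⟩
  rw [Pi.smul_apply, wedgeBasis_apply_self, smul_eq_mul, mul_one] at hεC
  rw [colWedge_apply_insert_erase b (fun i j ↦ hut i j) rfl (mem_colS_self S t)
    (fun i ↦ le_of_mem_colS hS.1) (fun i hi ↦ hz i t hi) hs hCc, hεC, mul_assoc]

/-- Let `S` be closed and `b` upper triangular with `b_{ij} = 0`
whenever `i ∈ S_j`, `i ≠ j`. Let `s,t` with `s ∉ S_t` and `C := (S_t∖{t}) ∪ {s}`.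
If `ε ∈ {1,−1}` satisfies `(⋀_{i∈S_t∖{t}} e_i) ∧ e_s = ε · ⋀_{i∈C} e_i`, then the
coordinate of `⋀_{i∈S_t}(b e_i)` along the standard basis vector `⋀_{i∈C} e_i` is
`ε · b_{st} · ∏_{i∈S_t∖{t}} b_{ii}`. Here the wedge `(⋀_{i∈S_t∖{t}} e_i) ∧ e_s` is the
wedge of the family consisting of the `e_i`, `i ∈ S_t∖{t}`, in increasing order,
followed by `e_s`. -/
theorem stmt5 {n : ℕ} (hn : 1 ≤ n) (S : Finset (Fin n × Fin n)) (hS : PairsClosed S)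
    (b : Matrix (Fin n) (Fin n) ℂ)
    (hut : ∀ i j : Fin n, j < i → b i j = 0)
    (hz : ∀ i j : Fin n, i ∈ colS S j → i ≠ j → b i j = 0)
    (s t : Fin n) (hs : s ∉ colS S t)
    (C : Finset (Fin n)) (hCdef : C = insert s ((colS S t).erase t))
    (hCc : C.card = (colS S t).card)
    (ε : ℂ) (hεsign : ε = 1 ∨ ε = -1)
    (hε : wedgeFam (colS S t).card
        (fun a => if h : (a : ℕ) < ((colS S t).erase t).card then
            stdVec (((colS S t).erase t).orderIsoOfFin rfl ⟨(a : ℕ), h⟩)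
          else stdVec s)
        = ε • wedgeBasis (colS S t).card C hCc) :
    colWedge (colS S t).card b (colS S t) rfl ⟨C, hCc⟩
      = ε * b s t * ∏ i ∈ (colS S t).erase t, b i i :=
  stmt5_general S hS b hut hz s t hs C hCdef hCc ε hε

end
end

section
/- Let S be a closed set of pairs and let (b^{(m)})_{m∈ℕ} be a sequence of upper triangular matrices in SL_n(ℂ) with b^{(m)}_{ij} = 0 for all pairs i ≠ j with i ∈ S_j. Suppose that for each i ∈ {1,…,n} the diagonal entries b^{(m)}_{ii} converge to a nonzero complex number as m → ∞, and that there exist indices s < t with s ∉ S_t such that |b^{(m)}_{st}| → ∞. Then the sequence m ↦ ⋀_{i∈S_t}(b^{(m)} e_i) does not converge in Λ^{|S_t|}ℂ^n. -/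
/-!
Put `E = S_t \ {t}` and `C = E ∪ {s}`. The coordinate of `⋀_{i∈S_t}(b e_i)` along
`⋀_{i∈C} e_i` is the minor of `b` with rows `C` and columns `S_t`. In that minor the column
of `t` vanishes off the row of `s`, since `b_{it} = 0` for `i ∈ E`, and deleting that row and
column leaves the principal minor on `E`, which is triangular. Hence the coordinate has
absolute value `|b_{st}| ∏_{i∈E} |b_{ii}|`, which tends to infinity.
-/

open Matrix Filter Topology

noncomputable section

section Minors

variable {R : Type*} [CommRing R]

lemma det_succ_eq_of_col_eq_zero {k : ℕ} (M : Matrix (Fin (k + 1)) (Fin (k + 1)) R)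
    (p j : Fin (k + 1)) (hcol : ∀ a, a ≠ p → M a j = 0) :
    M.det = (-1) ^ ((p : ℕ) + j) * M p j * (M.submatrix p.succAbove j.succAbove).det := by
  rw [det_succ_column M j, Finset.sum_eq_single p (fun a _ ha => by simp [hcol a ha])
    (by simp)]

lemma det_submatrix_orderEmbOfFin_of_isUpperTriangular {ι : Type*} [LinearOrder ι]
    {g : Matrix ι ι R} (hg : g.IsUpperTriangular) (E : Finset ι) {k : ℕ} (h : E.card = k) :
    (g.submatrix (E.orderEmbOfFin h) (E.orderEmbOfFin h)).det = ∏ i ∈ E, g i i := by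
  have hsub : (g.submatrix (E.orderEmbOfFin h) (E.orderEmbOfFin h)).IsUpperTriangular :=
    fun _ _ hab => hg ((E.orderEmbOfFin h).strictMono hab)
  rw [det_of_isUpperTriangular hsub]
  conv_rhs => rw [← E.map_orderEmbOfFin_univ h, Finset.prod_map]
  rfl

lemma exists_orderEmbOfFin_insert_succAbove {ι : Type*} [LinearOrder ι] {E : Finset ι}
    {s : ι} (h : (insert s E).card = E.card + 1) :
    ∃ p, (insert s E).orderEmbOfFin h p = s ∧
      ∀ a, (insert s E).orderEmbOfFin h (p.succAbove a) = E.orderEmbOfFin rfl a := by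
  set p := ((insert s E).orderIsoOfFin h).symm ⟨s, Finset.mem_insert_self s E⟩
  have hp : (insert s E).orderEmbOfFin h p = s := by
    rw [← Finset.coe_orderIsoOfFin_apply, OrderIso.apply_symm_apply]
  refine ⟨p, hp, congrFun (Finset.orderEmbOfFin_unique rfl (fun a => ?_)
    (((insert s E).orderEmbOfFin h).strictMono.comp (Fin.strictMono_succAbove p)))⟩
  refine (Finset.mem_insert.mp (Finset.orderEmbOfFin_mem _ h _)).resolve_left fun hs' => ?_
  exact Fin.succAbove_ne p a (((insert s E).orderEmbOfFin h).injective (hs'.trans hp.symm))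

end Minors

lemma colWedge_apply {n k : ℕ} (g : Matrix (Fin n) (Fin n) ℂ) (D : Finset (Fin n))
    (h : D.card = k) (C : SubK n k) : colWedge k g D h C = gminor k g C ⟨D, h⟩ := by
  simp [colWedge, wedgeFam, gminor, stdVec, enumK, mulVec_single]

lemma norm_gminor_insert_insert {n k : ℕ} {g : Matrix (Fin n) (Fin n) ℂ}
    (hg : g.IsUpperTriangular) {E : Finset (Fin n)} {s t : Fin n} (hE : ∀ i ∈ E, i < t)
    (hcol : ∀ i ∈ E, g i t = 0) (hC : (insert s E).card = k) (hD : (insert t E).card = k) :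
    ‖gminor k g ⟨insert s E, hC⟩ ⟨insert t E, hD⟩‖ = ‖g s t‖ * ∏ i ∈ E, ‖g i i‖ := by
  have htE : t ∉ E := fun ht => lt_irrefl t (hE t ht)
  obtain rfl : k = E.card + 1 := hD ▸ Finset.card_insert_of_notMem htE
  obtain ⟨p, hcp, hc⟩ := exists_orderEmbOfFin_insert_succAbove hC
  obtain ⟨q, hdq, hd⟩ := exists_orderEmbOfFin_insert_succAbove hD
  have hq : q = Fin.last _ := by
    by_contra hq
    have hlt := ((insert t E).orderEmbOfFin hD).strictMono (Fin.lt_last_iff_ne_last.mpr hq)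
    rw [hdq] at hlt
    rcases Finset.mem_insert.mp (Finset.orderEmbOfFin_mem _ hD (Fin.last _)) with h | h
    · exact hlt.ne' h
    · exact (hlt.trans (hE _ h)).false
  subst hq
  have hminor : gminor _ g ⟨insert s E, hC⟩ ⟨insert t E, hD⟩ =
      (g.submatrix ((insert s E).orderEmbOfFin hC) ((insert t E).orderEmbOfFin hD)).det := rfl
  rw [hminor, det_succ_eq_of_col_eq_zero _ p (Fin.last _), submatrix_submatrix,
    Fin.succAbove_last]
  · have hc' : ((insert s E).orderEmbOfFin hC) ∘ p.succAbove = E.orderEmbOfFin rfl := funext hc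
    have hd' : ((insert t E).orderEmbOfFin hD) ∘ Fin.castSucc = E.orderEmbOfFin rfl := by
      funext a
      rw [Function.comp_apply, ← Fin.succAbove_last, hd]
    rw [hc', hd', det_submatrix_orderEmbOfFin_of_isUpperTriangular hg]
    simp [hcp, hdq, norm_prod]
  · intro a ha
    obtain ⟨a, rfl⟩ := Fin.exists_succAbove_eq ha
    rw [submatrix_apply, hc, hdq]
    exact hcol _ (Finset.orderEmbOfFin_mem _ _ _)

theorem stmt16_general {n : ℕ} (S : Finset (Fin n × Fin n)) (hS : PairsClosed S)
    (b : ℕ → Matrix (Fin n) (Fin n) ℂ)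
    (hut : ∀ m (i j : Fin n), j < i → b m i j = 0)
    (hz : ∀ m (i j : Fin n), i ∈ colS S j → i ≠ j → b m i j = 0)
    (hdiag : ∀ i : Fin n, ∃ L : ℂ, L ≠ 0 ∧ Tendsto (fun m => b m i i) atTop (𝓝 L))
    (s t : Fin n) (hsS : s ∉ colS S t)
    (hinf : Tendsto (fun m => ‖b m s t‖) atTop atTop) :
    ¬ ∃ L : ExtP n (colS S t).card,
        Tendsto (fun m => colWedge (colS S t).card (b m) (colS S t) rfl)
          atTop (𝓝 L) := by
  rintro ⟨L, hL⟩
  set E := (S.filter (fun p => p.2 = t)).image Prod.fst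
  have hE : ∀ i ∈ E, i < t := by
    simp only [E, Finset.mem_image, Finset.mem_filter]
    rintro _ ⟨p, ⟨hp, rfl⟩, rfl⟩
    exact hS.1 p hp
  have hC : (insert s E).card = (colS S t).card := by
    rw [colS, Finset.card_insert_of_notMem fun h => hsS (Finset.mem_insert_of_mem h),
      Finset.card_insert_of_notMem fun h => lt_irrefl t (hE t h)]
  have hcoord : ∀ m, ‖colWedge _ (b m) (colS S t) rfl ⟨insert s E, hC⟩‖ =
      ‖b m s t‖ * ∏ i ∈ E, ‖b m i i‖ := fun m => by
    rw [colWedge_apply]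
    exact norm_gminor_insert_insert (fun i j h => hut m i j h) hE
      (fun i hi => hz m i t (Finset.mem_insert_of_mem hi) (hE i hi).ne) hC rfl
  choose La hLa0 hLa using hdiag
  have hprod : Tendsto (fun m => ∏ i ∈ E, ‖b m i i‖) atTop (𝓝 (∏ i ∈ E, ‖La i‖)) :=
    tendsto_finsetProd _ fun i _ => (hLa i).norm
  have hpos : 0 < ∏ i ∈ E, ‖La i‖ := Finset.prod_pos fun i _ => norm_pos_iff.mpr (hLa0 i)
  refine not_tendsto_atTop_of_tendsto_nhds ((tendsto_pi_nhds.mp hL ⟨insert s E, hC⟩).norm) ?_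
  simpa only [hcoord] using hinf.atTop_mul_pos hpos hprod

/-- Let `S` be closed and `(b^{(m)})` a sequence of upper triangular
matrices in `SL_n(ℂ)` with `b^{(m)}_{ij} = 0` for all `i ∈ S_j` with `i ≠ j`. If each
diagonal entry converges to a nonzero complex number and there are `s < t` with
`s ∉ S_t` and `|b^{(m)}_{st}| → ∞`, then the sequence `m ↦ ⋀_{i∈S_t}(b^{(m)} e_i)`
does not converge in `Λ^{|S_t|} ℂ^n`. -/
theorem stmt16 {n : ℕ} (hn : 1 ≤ n) (S : Finset (Fin n × Fin n)) (hS : PairsClosed S)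
    (b : ℕ → Matrix (Fin n) (Fin n) ℂ)
    (hdet : ∀ m, (b m).det = 1)
    (hut : ∀ m (i j : Fin n), j < i → b m i j = 0)
    (hz : ∀ m (i j : Fin n), i ∈ colS S j → i ≠ j → b m i j = 0)
    (hdiag : ∀ i : Fin n, ∃ L : ℂ, L ≠ 0 ∧ Tendsto (fun m => b m i i) atTop (𝓝 L))
    (s t : Fin n) (hst : s < t) (hsS : s ∉ colS S t)
    (hinf : Tendsto (fun m => ‖b m s t‖) atTop atTop) :
    ¬ ∃ L : ExtP n (colS S t).card,
        Tendsto (fun m => colWedge (colS S t).card (b m) (colS S t) rfl)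
          atTop (𝓝 L) :=
  stmt16_general S hS b hut hz hdiag s t hsS hinf

end
end
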